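/- arXiv:1801.00990 — 4 statements merged into one kernel-verified Lean document; each statement's English description precedes it below -/
import Mathlib

section
/- If u is four times continuously differentiable on a neighborhood of [−2h, 2h] and p is the unique cubic polynomial whose averages over the cells I_i = (ih,(i+1)h), i = −2,−1,0,1, agree with those of u, then |p(0) − u(0)| ≤ C·h⁴·sup|u⁽⁴⁾| and |p'(0) − u'(0)| ≤ C·h³·sup|u⁽⁴⁾| for a constant C independent of h and u. -/
/-!
Subtract from the interpolant `p` the Taylor cubic `T` of `u` at `0`. By Taylor's theorem
`|u - T| ≤ (8/3) M h⁴` on `[-2h, 2h]`, so the cubic `q = p - T` has all four cell integrals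
bounded by `(8/3) M h⁵`. On cubics, value and slope at `0` are fixed combinations of the cell
integrals `Iᵢ`: `12 h q(0) = -I₋₂ + 7 I₋₁ + 7 I₀ - I₁` and
`12 h² q'(0) = I₋₂ - 15 I₋₁ + 15 I₀ - I₁`, which gives both bounds with `C = 8`.
-/

open intervalIntegral Set
open scoped Nat

theorem integral_cubic (b0 b1 b2 b3 a b : ℝ) :
    ∫ x in a..b, (b3 * x ^ 3 + b2 * x ^ 2 + b1 * x + b0) =
      b3 * (b ^ 4 - a ^ 4) / 4 + b2 * (b ^ 3 - a ^ 3) / 3 + b1 * (b ^ 2 - a ^ 2) / 2 +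
        b0 * (b - a) := by
  have hF : ∀ x ∈ uIcc a b, HasDerivAt
      (fun x : ℝ => b3 * (x ^ 4 / 4) + b2 * (x ^ 3 / 3) + b1 * (x ^ 2 / 2) + b0 * x)
      (b3 * x ^ 3 + b2 * x ^ 2 + b1 * x + b0) x := fun x _ =>
    ((((((hasDerivAt_pow 4 x).div_const 4).const_mul b3).add
      (((hasDerivAt_pow 3 x).div_const 3).const_mul b2)).add
      (((hasDerivAt_pow 2 x).div_const 2).const_mul b1)).add
      ((hasDerivAt_id x).const_mul b0)).congr_deriv (by norm_num)
  rw [integral_eq_sub_of_hasDerivAt hF (Continuous.intervalIntegrable (by fun_prop) a b)]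
  ring

theorem abs_cubic_coeffs_le_of_abs_cell_integrals_le {h ε b0 b1 b2 b3 : ℝ} (hh : 0 < h)
    (hI : ∀ i : ℤ, i ∈ ({-2, -1, 0, 1} : Set ℤ) →
      |∫ x in (i * h)..((i + 1) * h), (b3 * x ^ 3 + b2 * x ^ 2 + b1 * x + b0)| ≤ ε) :
    |b0| ≤ 4 / 3 * ε / h ∧ |b1| ≤ 8 / 3 * ε / h ^ 2 := by
  set I : ℝ → ℝ := fun c =>
    ∫ x in (c * h)..((c + 1) * h), (b3 * x ^ 3 + b2 * x ^ 2 + b1 * x + b0) with hI_def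
  have hvalue : 12 * h * b0 = -I (-2) + 7 * I (-1) + 7 * I 0 - I 1 := by
    simp only [hI_def, integral_cubic]; ring
  have hslope : 12 * h ^ 2 * b1 = I (-2) - 15 * I (-1) + 15 * I 0 - I 1 := by
    simp only [hI_def, integral_cubic]; ring
  have hI' : ∀ i : ℤ, i ∈ ({-2, -1, 0, 1} : Set ℤ) → |I i| ≤ ε := hI
  have hm2 := hI' (-2) (by simp)
  have hm1 := hI' (-1) (by simp)
  have h0 := hI' 0 (by simp)
  have h1 := hI' 1 (by simp)
  push_cast at hm2 hm1 h0 h1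
  rw [abs_le] at hm2 hm1 h0 h1
  constructor
  · rw [le_div_iff₀ hh, ← abs_of_pos hh, ← abs_mul, abs_le]
    constructor <;> linarith
  · rw [le_div_iff₀ (by positivity), ← abs_of_pos (pow_pos hh 2), ← abs_mul, abs_le]
    constructor <;> linarith

theorem norm_sub_taylor_le_of_isOpen {E : Type*} [NormedAddCommGroup E] [NormedSpace ℝ E]
    [CompleteSpace E] {f : ℝ → E} {s : Set ℝ} {x₀ x M : ℝ} {n : ℕ} (hs : IsOpen s)
    (hsub : uIcc x₀ x ⊆ s) (hf : ContDiffOn ℝ (n + 1 : ℕ) f s)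
    (hM : ∀ t ∈ uIcc x₀ x, ‖iteratedDeriv (n + 1) f t‖ ≤ M) :
    ‖f x - ∑ k ∈ Finset.range (n + 1), ((k ! : ℝ)⁻¹ * (x - x₀) ^ k) • iteratedDeriv k f x₀‖ ≤
      M * |x - x₀| ^ (n + 1) / n ! := by
  rcases eq_or_ne x₀ x with rfl | hne
  · simp [Finset.sum_range_succ']
  have hderiv : ∀ k ≤ n + 1, ∀ t ∈ uIcc x₀ x,
      iteratedDerivWithin k f (uIcc x₀ x) t = iteratedDeriv k f t := fun k hk t ht =>
    iteratedDerivWithin_eq_iteratedDeriv (uniqueDiffOn_uIcc hne)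
      ((hf.contDiffAt (hs.mem_nhds (hsub ht))).of_le (by exact_mod_cast hk)) ht
  have hrem := taylor_integral_remainder (hf.mono hsub)
  rw [taylor_within_apply, Finset.sum_congr rfl fun k hk => by
      rw [hderiv k (by linarith [Finset.mem_range.1 hk]) x₀ left_mem_uIcc]] at hrem
  rw [hrem]
  calc _ ≤ |x - x₀| ^ n / n ! * M * |x - x₀| := by
        refine norm_integral_le_of_norm_le_const fun t ht => ?_
        have ht' := uIoc_subset_uIcc ht
        rw [norm_smul, Real.norm_eq_abs, abs_div, abs_pow, Nat.abs_cast,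
          hderiv (n + 1) le_rfl t ht']
        have hxt : |x - t| ^ n ≤ |x - x₀| ^ n :=
          pow_le_pow_left₀ (abs_nonneg _) (abs_sub_right_of_mem_uIcc ht') n
        gcongr
        exact hM t ht'
    _ = M * |x - x₀| ^ (n + 1) / n ! := by ring

theorem abs_sub_taylor_cubic_le {h M : ℝ} {u : ℝ → ℝ} {s : Set ℝ} (hs : IsOpen s)
    (hsub : Icc (-(2 * h)) (2 * h) ⊆ s) (hu : ContDiffOn ℝ 4 u s)
    (hM : ∀ x ∈ Icc (-(2 * h)) (2 * h), |iteratedDeriv 4 u x| ≤ M) :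
    ∀ x ∈ Icc (-(2 * h)) (2 * h), |u x - (iteratedDeriv 3 u 0 / 6 * x ^ 3 +
      iteratedDeriv 2 u 0 / 2 * x ^ 2 + deriv u 0 * x + u 0)| ≤ 8 / 3 * M * h ^ 4 := by
  intro x hx
  have hsub' : uIcc 0 x ⊆ Icc (-(2 * h)) (2 * h) :=
    uIcc_subset_Icc ⟨by linarith [hx.1, hx.2], by linarith [hx.1, hx.2]⟩ hx
  have hM0 : 0 ≤ M := (abs_nonneg _).trans (hM x hx)
  have key := norm_sub_taylor_le_of_isOpen (n := 3) hs (hsub'.trans hsub) hu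
    fun t ht => hM t (hsub' ht)
  simp only [Finset.sum_range_succ, Finset.sum_range_zero, Real.norm_eq_abs, sub_zero,
    iteratedDeriv_zero, iteratedDeriv_one, smul_eq_mul] at key
  norm_num [Nat.factorial] at key
  have hx4 : |x| ^ 4 ≤ (2 * h) ^ 4 := pow_le_pow_left₀ (abs_nonneg x) (abs_le.2 hx) 4
  calc _ ≤ M * |x| ^ 4 / 6 := by convert key using 3; ring
    _ ≤ M * (2 * h) ^ 4 / 6 := by gcongr
    _ = 8 / 3 * M * h ^ 4 := by ring

theorem abs_integral_sub_integral_le {f g : ℝ → ℝ} {a b B : ℝ} (hab : a ≤ b)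
    (hf : ContinuousOn f (Icc a b)) (hg : ContinuousOn g (Icc a b))
    (hB : ∀ x ∈ Icc a b, |f x - g x| ≤ B) :
    |(∫ x in a..b, f x) - ∫ x in a..b, g x| ≤ B * (b - a) := by
  rw [← integral_sub (hf.intervalIntegrable_of_Icc hab) (hg.intervalIntegrable_of_Icc hab),
    ← abs_of_nonneg (sub_nonneg.2 hab)]
  exact norm_integral_le_of_norm_le_const (f := fun x => f x - g x) fun x hx =>
    hB x (Ioc_subset_Icc_self (uIoc_of_le hab ▸ hx))

theorem abs_integral_cubic_sub_taylor_le {h M α β a0 a1 a2 a3 : ℝ} {u : ℝ → ℝ} {s : Set ℝ}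
    (hs : IsOpen s) (hsub : Icc (-(2 * h)) (2 * h) ⊆ s) (hu : ContDiffOn ℝ 4 u s)
    (hM : ∀ x ∈ Icc (-(2 * h)) (2 * h), |iteratedDeriv 4 u x| ≤ M)
    (hαβ : α ≤ β) (hcell : Icc α β ⊆ Icc (-(2 * h)) (2 * h))
    (hmatch : ∫ x in α..β, (a3 * x ^ 3 + a2 * x ^ 2 + a1 * x + a0) = ∫ x in α..β, u x) :
    |∫ x in α..β, ((a3 - iteratedDeriv 3 u 0 / 6) * x ^ 3 +
      (a2 - iteratedDeriv 2 u 0 / 2) * x ^ 2 + (a1 - deriv u 0) * x + (a0 - u 0))| ≤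
      8 / 3 * M * h ^ 4 * (β - α) := by
  rw [show ∫ x in α..β, ((a3 - iteratedDeriv 3 u 0 / 6) * x ^ 3 +
        (a2 - iteratedDeriv 2 u 0 / 2) * x ^ 2 + (a1 - deriv u 0) * x + (a0 - u 0)) =
      (∫ x in α..β, (a3 * x ^ 3 + a2 * x ^ 2 + a1 * x + a0)) -
        ∫ x in α..β, (iteratedDeriv 3 u 0 / 6 * x ^ 3 + iteratedDeriv 2 u 0 / 2 * x ^ 2 +
          deriv u 0 * x + u 0) by
      simp only [integral_cubic]; ring, hmatch]
  exact abs_integral_sub_integral_le hαβ ((hu.continuousOn.mono hsub).mono hcell) (by fun_prop)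
    fun x hx => abs_sub_taylor_cubic_le hs hsub hu hM x (hcell hx)

/-- Accuracy of the interpolating cubic at the boundary: fourth-order for the value
and third-order for the derivative, with a constant independent of h and u. -/
theorem cubic_interpolation_boundary_accuracy :
    ∃ C : ℝ, 0 < C ∧
      ∀ h : ℝ, 0 < h →
      ∀ (u : ℝ → ℝ) (s : Set ℝ), IsOpen s → Set.Icc (-(2 * h)) (2 * h) ⊆ s →
        ContDiffOn ℝ 4 u s →
      ∀ M : ℝ, (∀ x ∈ Set.Icc (-(2 * h)) (2 * h), |iteratedDeriv 4 u x| ≤ M) →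
      ∀ a0 a1 a2 a3 : ℝ,
        (∀ i : ℤ, i ∈ ({-2, -1, 0, 1} : Set ℤ) →
          (1 / h) * ∫ x in ((i : ℝ) * h)..(((i : ℝ) + 1) * h),
              (a3 * x ^ 3 + a2 * x ^ 2 + a1 * x + a0) =
            (1 / h) * ∫ x in ((i : ℝ) * h)..(((i : ℝ) + 1) * h), u x) →
        |a0 - u 0| ≤ C * h ^ 4 * M ∧ |a1 - deriv u 0| ≤ C * h ^ 3 * M := by
  refine ⟨8, by norm_num, fun h hh u s hs hsub hu M hM a0 a1 a2 a3 hAvg => ?_⟩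
  have hM0 : 0 ≤ M := (abs_nonneg _).trans (hM 0 ⟨by linarith, by linarith⟩)
  have hcells : ∀ i : ℤ, i ∈ ({-2, -1, 0, 1} : Set ℤ) →
      |∫ x in (i * h)..((i + 1) * h), ((a3 - iteratedDeriv 3 u 0 / 6) * x ^ 3 +
        (a2 - iteratedDeriv 2 u 0 / 2) * x ^ 2 + (a1 - deriv u 0) * x + (a0 - u 0))| ≤
        8 / 3 * M * h ^ 4 * h := by
    intro i hi
    have hi' : (-2 : ℝ) ≤ i ∧ (i : ℝ) ≤ 1 := by rcases hi with rfl | rfl | rfl | rfl <;> norm_num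
    convert abs_integral_cubic_sub_taylor_le hs hsub hu hM (by nlinarith)
      (Icc_subset_Icc (by nlinarith) (by nlinarith))
      (mul_left_cancel₀ (one_div_ne_zero hh.ne') (hAvg i hi)) using 2
    ring
  obtain ⟨hvalue, hslope⟩ := abs_cubic_coeffs_le_of_abs_cell_integrals_le hh hcells
  constructor
  · calc _ ≤ _ := hvalue
      _ = 32 / 9 * (h ^ 4 * M) := by field_simp; ring
      _ ≤ 8 * h ^ 4 * M := by linarith [mul_nonneg (pow_pos hh 4).le hM0]
  · calc _ ≤ _ := hslope
      _ = 64 / 9 * (h ^ 3 * M) := by field_simp; ring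
      _ ≤ 8 * h ^ 3 * M := by linarith [mul_nonneg (pow_pos hh 3).le hM0]
end

section
/- The extrapolation q(1) is exact for cubics: if u is any polynomial of degree at most 3 and ū_{M−j} are its cell averages over I_{M−j}, then (25ū_M − 23ū_{M−1} + 13ū_{M−2} − 3ū_{M−3})/12 = u(1) and (35ū_M − 69ū_{M−1} + 45ū_{M−2} − 11ū_{M−3})/(12h) = u'(1). -/
open intervalIntegral Polynomial

theorem Polynomial.intervalIntegral_eval_eq_sum_range {p : ℝ[X]} {n : ℕ} (hn : p.natDegree < n)
    (a b : ℝ) :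
    ∫ x in a..b, p.eval x =
      ∑ k ∈ Finset.range n, p.coeff k * (b ^ (k + 1) - a ^ (k + 1)) / (k + 1) := by
  simp_rw [eval_eq_sum_range' hn]
  rw [integral_finsetSum fun k _ => ((continuous_pow k).const_mul _).intervalIntegrable a b]
  simp_rw [integral_const_mul, integral_pow, mul_div_assoc]

/-- The extrapolation formulas are exact for polynomials of degree ≤ 3. -/
theorem extrapolation_exact_for_cubics (h : ℝ) (hh : 0 < h)
    (u : Polynomial ℝ) (hu : u.natDegree ≤ 3) (ub : ℕ → ℝ)
    (H : ∀ j : ℕ, j ≤ 3 →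
      ub j = (1 / h) * ∫ x in (1 - ((j : ℝ) + 1) * h)..(1 - (j : ℝ) * h), u.eval x) :
    (25 * ub 0 - 23 * ub 1 + 13 * ub 2 - 3 * ub 3) / 12 = u.eval 1 ∧
    (35 * ub 0 - 69 * ub 1 + 45 * ub 2 - 11 * ub 3) / (12 * h) = u.derivative.eval 1 := by
  have hu₄ : u.natDegree < 4 := by omega
  have hu'₃ : u.derivative.natDegree < 3 := (natDegree_derivative_le u).trans_lt (by omega)
  have hh₀ : h ≠ 0 := hh.ne'
  simp only [H 0 (by norm_num), H 1 (by norm_num), H 2 (by norm_num), H 3 (by norm_num),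
    intervalIntegral_eval_eq_sum_range hu₄]
  simp only [eval_eq_sum_range' hu₄, eval_eq_sum_range' hu'₃, coeff_derivative,
    Finset.sum_range_succ, Finset.sum_range_zero]
  push_cast
  constructor <;> field_simp <;> ring
end

section
/- For the inflow linear system (paper's eq. for u⁽¹⁾ at a subsonic entrance): the 3×3 matrix with rows L₁ (left eigenvector for λ₁ = v − c of the Euler Jacobian), (v³/2 − c²v/(γ−1), −v² + c²/(γ−1), v), and (0, 1, 0) is invertible whenever 0 < v < c, so the system uniquely determines u⁽¹⁾. -/
/-- The subsonic-inflow linear system matrix (first left eigenvector, differentiated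
pressure condition row, density condition row) is invertible for 0 < v < c. -/
theorem subsonic_inflow_system_invertible (γ v c : ℝ) (hγ : 1 < γ)
    (hv : 0 < v) (hvc : v < c) :
    let L1 : Fin 3 → ℝ :=
      (1 / (2 * c ^ 2)) • ![(γ - 1) * v ^ 2 / 2 + v * c, -(γ - 1) * v - c, γ - 1]
    let M : Matrix (Fin 3) (Fin 3) ℝ :=
      Matrix.of ![L1,
        ![v ^ 3 / 2 - c ^ 2 * v / (γ - 1), -v ^ 2 + c ^ 2 / (γ - 1), v],
        ![0, 1, 0]]
    IsUnit M.det ∧ ∀ w : Fin 3 → ℝ, ∃! u : Fin 3 → ℝ, M.mulVec u = w := by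
  intro L1 M
  have hc : (0 : ℝ) < c := hv.trans hvc
  have hγ1 : γ - 1 ≠ 0 := by linarith
  have hdet : M.det = -(v * (v + c)) / (2 * c) := by
    simp only [M, L1, Matrix.det_fin_three, Matrix.of_apply, Matrix.cons_val',
      Matrix.cons_val_zero, Matrix.cons_val_one, Matrix.head_cons, Matrix.head_fin_const,
      Matrix.empty_val', Matrix.cons_val_fin_one, Matrix.head_val', Pi.smul_apply,
      smul_eq_mul, Matrix.cons_val_two, Matrix.tail_cons]
    field_simp
    ring
  have hdet0 : M.det ≠ 0 := by
    rw [hdet]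
    have : 0 < v * (v + c) := by positivity
    intro h
    have := div_eq_zero_iff.mp h
    rcases this with h1 | h1 <;> nlinarith
  have hunit : IsUnit M.det := isUnit_iff_ne_zero.mpr hdet0
  refine ⟨hunit, fun w => ?_⟩
  refine ⟨M⁻¹.mulVec w, ?_, ?_⟩
  · show M.mulVec (M⁻¹.mulVec w) = w
    rw [Matrix.mulVec_mulVec, Matrix.mul_nonsing_inv M hunit, Matrix.one_mulVec]
  · intro u hu
    have : M⁻¹.mulVec (M.mulVec u) = M⁻¹.mulVec w := by rw [hu]
    rwa [Matrix.mulVec_mulVec, Matrix.nonsing_inv_mul M hunit, Matrix.one_mulVec] at this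
end

section
/- The boundary-value formula (−ū₁ + 7ū₀ + 7ū₋₁ − ū₋₂)/12 reproduces u(0) exactly for any polynomial u of degree at most 3, where ū_i is the average of u over ((i)h, (i+1)h). -/
open intervalIntegral

/-- The boundary-value formula (−ū₁ + 7ū₀ + 7ū₋₁ − ū₋₂)/12 reproduces u(0) exactly for
polynomials of degree ≤ 3, with ū_i the average of u over (ih, (i+1)h). -/
theorem boundary_value_formula_exact_for_cubics (h : ℝ) (hh : 0 < h)
    (u : Polynomial ℝ) (hu : u.natDegree ≤ 3) (ub : ℤ → ℝ)
    (H : ∀ i : ℤ, i ∈ ({-2, -1, 0, 1} : Set ℤ) →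
      ub i = (1 / h) * ∫ x in ((i : ℝ) * h)..(((i : ℝ) + 1) * h), u.eval x) :
    (-ub 1 + 7 * ub 0 + 7 * ub (-1) - ub (-2)) / 12 = u.eval 0 := by
  have hd : u.natDegree < 4 := lt_of_le_of_lt hu (by norm_num)
  have heval : ∀ x : ℝ, u.eval x =
      u.coeff 0 + u.coeff 1 * x + u.coeff 2 * x ^ 2 + u.coeff 3 * x ^ 3 := by
    intro x
    rw [Polynomial.eval_eq_sum_range' hd]
    simp [Finset.sum_range_succ]
  have key : ∀ c d : ℝ, (∫ x in c..d, u.eval x) =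
      u.coeff 0 * (d - c) + u.coeff 1 * (d ^ 2 - c ^ 2) / 2
        + u.coeff 2 * (d ^ 3 - c ^ 3) / 3 + u.coeff 3 * (d ^ 4 - c ^ 4) / 4 := by
    intro c d
    simp only [heval]
    rw [intervalIntegral.integral_add, intervalIntegral.integral_add,
        intervalIntegral.integral_add]
    · rw [intervalIntegral.integral_const, intervalIntegral.integral_const_mul,
        intervalIntegral.integral_const_mul, intervalIntegral.integral_const_mul,
        integral_id, integral_pow, integral_pow]
      push_cast
      rw [smul_eq_mul]
      ring
    all_goals apply Continuous.intervalIntegrable; fun_prop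
  have e1 := H 1 (by simp)
  have e0 := H 0 (by simp)
  have em1 := H (-1) (by simp)
  have em2 := H (-2) (by simp)
  rw [e1, e0, em1, em2, key, key, key, key, heval 0]
  have hne : h ≠ 0 := ne_of_gt hh
  field_simp
  ring
end
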